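/- Fix positive integers a_1,…,a_k and b_1,…,b_l. The set S(a,b) of non-negative integer solutions of the homogeneous linear Diophantine equation a_1 p_1 + … + a_k p_k − b_1 q_1 − … − b_l q_j = 0 is a finitely generated additive submonoid of ℕ^k × ℕ^l. -/

import Mathlib

open Finset

/-- The weighted degree `a·p - b·q` of a pair of exponent vectors. -/
def degSum {k l : ℕ} (a : Fin k → ℕ) (b : Fin l → ℕ)
    (x : (Fin k → ℕ) × (Fin l → ℕ)) : ℤ :=
  (∑ i, (a i : ℤ) * x.1 i) - ∑ j, (b j : ℤ) * x.2 j

lemma muAdd {k l : ℕ} (u v : (Fin k → ℕ) × (Fin l → ℕ)) :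
    ((∑ i, (u + v).1 i) + ∑ j, (u + v).2 j) =
      ((∑ i, u.1 i) + ∑ j, u.2 j) + ((∑ i, v.1 i) + ∑ j, v.2 j) := by
  simp only [Prod.fst_add, Prod.snd_add, Pi.add_apply, Finset.sum_add_distrib]
  ring

lemma degSum_add {k l : ℕ} (a : Fin k → ℕ) (b : Fin l → ℕ)
    (u v : (Fin k → ℕ) × (Fin l → ℕ)) :
    degSum a b (u + v) = degSum a b u + degSum a b v := by
  simp only [degSum, Prod.fst_add, Prod.snd_add, Pi.add_apply, Nat.cast_add, mul_add,
    Finset.sum_add_distrib]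
  ring

/-- The set `S(a,b)` of non-negative integer solutions of the homogeneous linear
Diophantine equation `a₁p₁ + ⋯ + a_k p_k − b₁q₁ − ⋯ − b_l q_l = 0`, viewed as an
additive submonoid of `ℕ^k × ℕ^l`, is finitely generated. -/
theorem homogeneous_solutions_fg
    (k l : ℕ) (a : Fin k → ℕ) (b : Fin l → ℕ)
    (ha : ∀ i, 0 < a i) (hb : ∀ j, 0 < b j)
    (S : AddSubmonoid ((Fin k → ℕ) × (Fin l → ℕ)))
    (hS : (S : Set ((Fin k → ℕ) × (Fin l → ℕ))) =
      {x : (Fin k → ℕ) × (Fin l → ℕ) | degSum a b x = 0}) :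
    S.FG := by
  classical
  set M := (Fin k → ℕ) × (Fin l → ℕ)
  have hmem : ∀ x : M, x ∈ S ↔ degSum a b x = 0 := by
    intro x
    rw [← SetLike.mem_coe, hS]; rfl
  -- the measure
  let μ : M → ℕ := fun x => (∑ i, x.1 i) + ∑ j, x.2 j
  have hμ0 : ∀ x : M, μ x = 0 → x = 0 := by
    intro x hx
    simp only [μ] at hx
    have h1 : (∑ i, x.1 i) = 0 := by omega
    have h2 : (∑ j, x.2 j) = 0 := by omega
    rw [Finset.sum_eq_zero_iff] at h1 h2
    ext i
    · exact h1 i (Finset.mem_univ i)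
    · exact h2 i (Finset.mem_univ i)
  -- componentwise ≤ with equal measure gives equality
  have heq_of_le : ∀ z m : M, z ≤ m → μ z = μ m → z = m := by
    intro z m hzm hμeq
    obtain ⟨h1, h2⟩ := hzm
    have s1 : (∑ i, z.1 i) ≤ ∑ i, m.1 i := Finset.sum_le_sum fun i _ => h1 i
    have s2 : (∑ j, z.2 j) ≤ ∑ j, m.2 j := Finset.sum_le_sum fun j _ => h2 j
    have e1 : (∑ i, z.1 i) = ∑ i, m.1 i := by simp only [μ] at hμeq; omega
    have e2 : (∑ j, z.2 j) = ∑ j, m.2 j := by simp only [μ] at hμeq; omega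
    have p1 := (Finset.sum_eq_sum_iff_of_le (fun i _ => h1 i)).1 e1
    have p2 := (Finset.sum_eq_sum_iff_of_le (fun j _ => h2 j)).1 e2
    ext i
    · exact ((p1 i (Finset.mem_univ i))).symm ▸ rfl
    · exact ((p2 i (Finset.mem_univ i))).symm ▸ rfl
  -- subtraction stays in S
  have hsub : ∀ x m : M, x ∈ S → m ∈ S → m ≤ x → x - m ∈ S ∧ m + (x - m) = x := by
    intro x m hx hm hle
    obtain ⟨h1, h2⟩ := hle
    have hxm : m + (x - m) = x := by
      ext i
      · exact Nat.add_sub_cancel' (h1 i)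
      · exact Nat.add_sub_cancel' (h2 i)
    refine ⟨?_, hxm⟩
    rw [hmem]
    have := degSum_add a b m (x - m)
    rw [hxm] at this
    rw [hmem] at hx hm
    linarith
  -- the set of minimal nonzero elements
  let G : Set M := {m | m ∈ S ∧ m ≠ 0 ∧ ∀ z ∈ S, z ≠ 0 → z ≤ m → z = m}
  have hGfin : G.Finite := by
    have hpwo : (Set.univ : Set M).IsPWO := by
      have h1 := Set.isPWO_of_wellQuasiOrderedLE (α := Fin k → ℕ) Set.univ
      have h2 := Set.isPWO_of_wellQuasiOrderedLE (α := Fin l → ℕ) Set.univ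
      exact (h1.prod h2).mono (by intro x _; simp)
    have hG : G.PartiallyWellOrderedOn (· ≤ ·) := hpwo.mono (Set.subset_univ G)
    have hanti : IsAntichain (· ≤ ·) G := by
      intro m hm m' hm' hne hle
      exact hne (hm'.2.2 m hm.1 hm.2.1 hle)
    exact hanti.finite_of_partiallyWellOrderedOn hG
  rw [AddSubmonoid.fg_iff]
  refine ⟨G, ?_, hGfin⟩
  apply le_antisymm
  · rw [AddSubmonoid.closure_le]
    intro m hm; exact hm.1
  · -- every element of S is in the closure of G, by strong induction on μ
    intro x hx
    have key : ∀ n : ℕ, ∀ x : M, μ x = n → x ∈ S → x ∈ AddSubmonoid.closure G := by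
      intro n
      induction n using Nat.strong_induction_on with
      | _ n ih =>
        intro x hμx hx
        rcases eq_or_ne x 0 with rfl | hx0
        · exact (AddSubmonoid.closure G).zero_mem
        -- find a minimal nonzero element of S below x
        have hex : ∃ n : ℕ, ∃ y : M, (y ∈ S ∧ y ≠ 0 ∧ y ≤ x) ∧ μ y = n :=
          ⟨μ x, x, ⟨hx, hx0, le_refl x⟩, rfl⟩
        obtain ⟨m, ⟨hmS, hm0, hmx⟩, hμm⟩ := Nat.find_spec hex
        have hmin : ∀ z : M, z ∈ S → z ≠ 0 → z ≤ m → z = m := by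
          intro z hzS hz0 hzm
          have hzx : z ≤ x := le_trans hzm hmx
          have : Nat.find hex ≤ μ z := Nat.find_le ⟨z, ⟨hzS, hz0, hzx⟩, rfl⟩
          have hμzm : μ z ≤ μ m := by
            obtain ⟨h1, h2⟩ := hzm
            exact Nat.add_le_add (Finset.sum_le_sum fun i _ => h1 i)
              (Finset.sum_le_sum fun j _ => h2 j)
          exact heq_of_le z m hzm (by omega)
        have hmG : m ∈ G := ⟨hmS, hm0, hmin⟩
        obtain ⟨hdS, hdx⟩ := hsub x m hx hmS hmx
        -- x = m + (x - m), with μ (x - m) < n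
        have hμsum : μ m + μ (x - m) = n := by
          have h : μ (m + (x - m)) = μ m + μ (x - m) := muAdd m (x - m)
          rw [hdx] at h
          omega
        have hμmpos : 0 < μ m := by
          rcases Nat.eq_zero_or_pos (μ m) with h | h
          · exact absurd (hμ0 m h) hm0
          · exact h
        have hd : x - m ∈ AddSubmonoid.closure G :=
          ih (μ (x - m)) (by omega) (x - m) rfl hdS
        have := AddSubmonoid.add_mem _ (AddSubmonoid.subset_closure hmG) hd
        rwa [hdx] at this
    exact key (μ x) x rfl hx
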